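/- arXiv:1605.04001 — 6 statements merged into one kernel-verified Lean document; each statement's English description precedes it below -/
import Mathlib

section
/- Let α be a complex number satisfying α² − (1+i)α + 1 = 0, and let β be the other root of x² − (1+i)x + 1. Then α and conj β are algebraic over ℚ, and the minimal polynomial over ℚ of α, as well as the minimal polynomial over ℚ of conj β, equals X⁴ − 2X³ + 4X² − 2X + 1. In particular α and conj β have degree 4 over ℚ. -/
open Complex Polynomial

noncomputable def PZ : ℤ[X] := X ^ 4 - 2 * X ^ 3 + 4 * X ^ 2 - 2 * X + 1

lemma PZ_monic : PZ.Monic := by unfold PZ; monicity!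
lemma PZ_natDegree : PZ.natDegree = 4 := by unfold PZ; compute_degree!
lemma PZ_coeff0 : PZ.coeff 0 = 1 := by simp [PZ, coeff_X_pow, coeff_one, coeff_X]
lemma PZ_coeff1 : PZ.coeff 1 = -2 := by simp [PZ, coeff_X_pow, coeff_one, coeff_X]
lemma PZ_coeff2 : PZ.coeff 2 = 4 := by simp [PZ, coeff_X_pow, coeff_one, coeff_X]
lemma PZ_coeff3 : PZ.coeff 3 = -2 := by simp [PZ, coeff_X_pow, coeff_one, coeff_X]
lemma PZ_coeff4 : PZ.coeff 4 = 1 := by simp [PZ, coeff_X_pow, coeff_one, coeff_X]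

lemma dec13 : ∀ g0 g1 h0 h1 h2 h3 : ZMod 3,
    ¬(g0*h0 = 1 ∧ g0*h1+g1*h0 = -2 ∧ g0*h2+g1*h1 = 4 ∧ g0*h3+g1*h2 = -2 ∧ g1*h3 = 1) := by
  decide

lemma dec22 : ∀ g0 g1 g2 h0 h1 h2 : ZMod 3,
    ¬(g0*h0 = 1 ∧ g0*h1+g1*h0 = -2 ∧ g0*h2+g1*h1+g2*h0 = 4 ∧ g1*h2+g2*h1 = -2 ∧ g2*h2 = 1) := by
  decide

lemma coeff_mul' (g h : ℤ[X]) (n : ℕ) :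
    (g*h).coeff n = ∑ i ∈ Finset.range (n+1), g.coeff i * h.coeff (n - i) := by
  rw [coeff_mul, Finset.Nat.sum_antidiagonal_eq_sum_range_succ_mk]

lemma no13 (g h : ℤ[X]) (hg : g.natDegree = 1) (hh : h.natDegree = 3) : g * h ≠ PZ := by
  intro he
  have c : ∀ n, (∑ i ∈ Finset.range (n+1), g.coeff i * h.coeff (n - i)) = PZ.coeff n :=
    fun n => by rw [← coeff_mul', he]
  have g2 : g.coeff 2 = 0 := coeff_eq_zero_of_natDegree_lt (by omega)
  have g3 : g.coeff 3 = 0 := coeff_eq_zero_of_natDegree_lt (by omega)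
  have g4 : g.coeff 4 = 0 := coeff_eq_zero_of_natDegree_lt (by omega)
  have h4 : h.coeff 4 = 0 := coeff_eq_zero_of_natDegree_lt (by omega)
  have e0 := c 0; have e1 := c 1; have e2 := c 2; have e3 := c 3; have e4 := c 4
  simp [Finset.sum_range_succ, PZ_coeff0, PZ_coeff1, PZ_coeff2, PZ_coeff3, PZ_coeff4,
    g2, g3, g4, h4] at e0 e1 e2 e3 e4
  exact dec13 (g.coeff 0) (g.coeff 1) (h.coeff 0) (h.coeff 1) (h.coeff 2) (h.coeff 3)
    ⟨by exact_mod_cast congrArg (fun z : ℤ => (z : ZMod 3)) e0,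
     by exact_mod_cast congrArg (fun z : ℤ => (z : ZMod 3)) e1,
     by exact_mod_cast congrArg (fun z : ℤ => (z : ZMod 3)) e2,
     by exact_mod_cast congrArg (fun z : ℤ => (z : ZMod 3)) e3,
     by exact_mod_cast congrArg (fun z : ℤ => (z : ZMod 3)) e4⟩

lemma no22 (g h : ℤ[X]) (hg : g.natDegree = 2) (hh : h.natDegree = 2) : g * h ≠ PZ := by
  intro he
  have c : ∀ n, (∑ i ∈ Finset.range (n+1), g.coeff i * h.coeff (n - i)) = PZ.coeff n :=
    fun n => by rw [← coeff_mul', he]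
  have g3 : g.coeff 3 = 0 := coeff_eq_zero_of_natDegree_lt (by omega)
  have g4 : g.coeff 4 = 0 := coeff_eq_zero_of_natDegree_lt (by omega)
  have h3 : h.coeff 3 = 0 := coeff_eq_zero_of_natDegree_lt (by omega)
  have h4 : h.coeff 4 = 0 := coeff_eq_zero_of_natDegree_lt (by omega)
  have e0 := c 0; have e1 := c 1; have e2 := c 2; have e3 := c 3; have e4 := c 4
  simp [Finset.sum_range_succ, PZ_coeff0, PZ_coeff1, PZ_coeff2, PZ_coeff3, PZ_coeff4,
    g3, g4, h3, h4] at e0 e1 e2 e3 e4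
  exact dec22 (g.coeff 0) (g.coeff 1) (g.coeff 2) (h.coeff 0) (h.coeff 1) (h.coeff 2)
    ⟨by exact_mod_cast congrArg (fun z : ℤ => (z : ZMod 3)) e0,
     by exact_mod_cast congrArg (fun z : ℤ => (z : ZMod 3)) e1,
     by exact_mod_cast congrArg (fun z : ℤ => (z : ZMod 3)) e2,
     by exact_mod_cast congrArg (fun z : ℤ => (z : ZMod 3)) e3,
     by exact_mod_cast congrArg (fun z : ℤ => (z : ZMod 3)) e4⟩

lemma PZ_irred : Irreducible PZ := by
  constructor
  · intro hu
    have := natDegree_eq_zero_of_isUnit hu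
    rw [PZ_natDegree] at this
    exact absurd this (by norm_num)
  · intro g h he
    by_contra hc
    push_neg at hc
    obtain ⟨hgu, hhu⟩ := hc
    have hne : PZ ≠ 0 := PZ_monic.ne_zero
    have hg0 : g ≠ 0 := by rintro rfl; simp at he; exact hne he
    have hh0 : h ≠ 0 := by rintro rfl; simp at he; exact hne he
    have hd : g.natDegree + h.natDegree = 4 := by
      rw [← natDegree_mul hg0 hh0, ← he, PZ_natDegree]
    have hl : g.leadingCoeff * h.leadingCoeff = 1 := by
      rw [← leadingCoeff_mul, ← he]; exact PZ_monic
    have hgd : g.natDegree ≠ 0 := by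
      intro h0'
      apply hgu
      rw [eq_C_of_natDegree_eq_zero h0']
      refine isUnit_C.mpr (isUnit_of_mul_isUnit_left (y := h.leadingCoeff) ?_)
      rw [show g.coeff 0 = g.leadingCoeff by rw [leadingCoeff, h0'], hl]
      exact isUnit_one
    have hhd : h.natDegree ≠ 0 := by
      intro h0'
      apply hhu
      rw [eq_C_of_natDegree_eq_zero h0']
      refine isUnit_C.mpr (isUnit_of_mul_isUnit_right (x := g.leadingCoeff) ?_)
      rw [show h.coeff 0 = h.leadingCoeff by rw [leadingCoeff, h0'], hl]
      exact isUnit_one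
    have : g.natDegree = 1 ∨ g.natDegree = 2 ∨ g.natDegree = 3 := by omega
    rcases this with h1 | h2 | h3
    · exact no13 g h h1 (by omega) he.symm
    · exact no22 g h h2 (by omega) he.symm
    · exact no13 h g (by omega) h3 (by rw [mul_comm]; exact he.symm)

noncomputable def PQ : ℚ[X] := X ^ 4 - 2 * X ^ 3 + 4 * X ^ 2 - 2 * X + 1

lemma PQ_eq : PZ.map (Int.castRingHom ℚ) = PQ := by
  simp [PZ, PQ, Polynomial.map_ofNat]

lemma PQ_monic : PQ.Monic := by unfold PQ; monicity!
lemma PQ_natDegree : PQ.natDegree = 4 := by unfold PQ; compute_degree!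

lemma PQ_irred : Irreducible PQ :=
  PQ_eq ▸ (Polynomial.IsPrimitive.Int.irreducible_iff_irreducible_map_cast PZ_monic.isPrimitive).mp PZ_irred

lemma aeval_PQ (z : ℂ) : (aeval z) PQ = z ^ 4 - 2 * z ^ 3 + 4 * z ^ 2 - 2 * z + 1 := by
  simp [PQ, map_ofNat]

/-- If `α` is a root of `x² − (1+i)x + 1` and `β` is the other root, then `α` and
`conj β` are algebraic over `ℚ`, with minimal polynomial `X⁴ − 2X³ + 4X² − 2X + 1`;
in particular they have degree `4` over `ℚ`. -/
theorem minpoly_alpha_conj_beta (α β : ℂ)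
    (hα : α ^ 2 - (1 + I) * α + 1 = 0)
    (hsum : α + β = 1 + I) (hprod : α * β = 1) :
    IsAlgebraic ℚ α ∧ IsAlgebraic ℚ ((starRingEnd ℂ) β) ∧
    minpoly ℚ α = (X ^ 4 - 2 * X ^ 3 + 4 * X ^ 2 - 2 * X + 1 : ℚ[X]) ∧
    minpoly ℚ ((starRingEnd ℂ) β) = (X ^ 4 - 2 * X ^ 3 + 4 * X ^ 2 - 2 * X + 1 : ℚ[X]) ∧
    (minpoly ℚ α).natDegree = 4 ∧ (minpoly ℚ ((starRingEnd ℂ) β)).natDegree = 4 := by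
  have hβ : β ^ 2 - (1 + I) * β + 1 = 0 := by linear_combination β * hsum - hprod
  have hβc : ((starRingEnd ℂ) β) ^ 2 - (1 - I) * ((starRingEnd ℂ) β) + 1 = 0 := by
    have := congrArg (starRingEnd ℂ) hβ
    simp only [map_add, map_sub, map_mul, map_pow, map_one, Complex.conj_I, map_zero] at this
    linear_combination this
  have haα : (aeval α) PQ = 0 := by
    rw [aeval_PQ]
    linear_combination (α ^ 2 - (1 - I) * α + 1) * hα + α ^ 2 * Complex.I_sq
  have haβ : (aeval ((starRingEnd ℂ) β)) PQ = 0 := by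
    rw [aeval_PQ]
    linear_combination (((starRingEnd ℂ) β) ^ 2 - (1 + I) * ((starRingEnd ℂ) β) + 1) * hβc + ((starRingEnd ℂ) β) ^ 2 * Complex.I_sq
  have hmα : minpoly ℚ α = PQ := (minpoly.eq_of_irreducible_of_monic PQ_irred haα PQ_monic).symm
  have hmβ : minpoly ℚ ((starRingEnd ℂ) β) = PQ :=
    (minpoly.eq_of_irreducible_of_monic PQ_irred haβ PQ_monic).symm
  exact ⟨⟨PQ, PQ_monic.ne_zero, haα⟩, ⟨PQ, PQ_monic.ne_zero, haβ⟩, hmα, hmβ,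
    by rw [hmα, PQ_natDegree], by rw [hmβ, PQ_natDegree]⟩
end

section
/- Let α and β be the two roots in ℂ of the polynomial x² − (1+i)x + 1. The four vectors v_k := (α^k, (conj β)^k) ∈ ℂ², for k = 0, 1, 2, 3, are linearly independent over ℝ and span ℂ² as a real vector space; i.e. (v₀, v₁, v₂, v₃) is an ℝ-basis of ℂ² viewed as a 4-dimensional real vector space. (Hence their ℤ-span Γ is a full lattice in ℂ², so that ℂ²/Γ is a complex 2-torus.) -/
open Complex ComplexConjugate

/-!
The two roots of `x² − (1+i)x + 1` are not real, distinct (the discriminant is `2i − 4`), and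
`α ≠ conj β` (otherwise `α + β = 2 Re α` would be real), so `α, conj α, conj β, β` are four
distinct points. If real numbers `g_k` satisfy `∑ g_k v_k = 0`, the real cubic `∑ g_k X^k`
vanishes at `α` and `conj β`, hence also at their conjugates; having four roots it is zero.
Four independent vectors span the four-dimensional space `ℂ²`.
-/

theorem sum_ofReal_mul_conj_pow_eq_zero {n : ℕ} (g : Fin n → ℝ) {z : ℂ}
    (h : ∑ i, (g i : ℂ) * z ^ (i : ℕ) = 0) : ∑ i, (g i : ℂ) * conj z ^ (i : ℕ) = 0 := by
  simpa [map_sum] using congrArg conj h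

theorem linearIndependent_pow_prod_of_injective {z w : ℂ}
    (h : Function.Injective ![z, conj z, w, conj w]) :
    LinearIndependent ℝ (fun k : Fin 4 => ((z ^ (k : ℕ), w ^ (k : ℕ)) : ℂ × ℂ)) := by
  rw [Fintype.linearIndependent_iff]
  intro g hg
  have hz : ∑ i, (g i : ℂ) * z ^ (i : ℕ) = 0 := by
    simpa [Prod.fst_sum, Complex.real_smul] using congrArg Prod.fst hg
  have hw : ∑ i, (g i : ℂ) * w ^ (i : ℕ) = 0 := by
    simpa [Prod.snd_sum, Complex.real_smul] using congrArg Prod.snd hg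
  have hg0 : (fun i => (g i : ℂ)) = 0 := by
    refine Matrix.eq_zero_of_forall_index_sum_mul_pow_eq_zero h fun j => ?_
    fin_cases j
    exacts [hz, sum_ofReal_mul_conj_pow_eq_zero g hz, hw, sum_ofReal_mul_conj_pow_eq_zero g hw]
  exact fun i => Complex.ofReal_eq_zero.mp (congrFun hg0 i)

theorem span_pow_prod_eq_top_of_injective {z w : ℂ}
    (h : Function.Injective ![z, conj z, w, conj w]) :
    Submodule.span ℝ (Set.range fun k : Fin 4 => ((z ^ (k : ℕ), w ^ (k : ℕ)) : ℂ × ℂ)) =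
      ⊤ := by
  apply (linearIndependent_pow_prod_of_injective h).span_eq_top_of_card_eq_finrank
  simp [Module.finrank_prod, Complex.finrank_real_complex]

theorem conj_ne_self_of_sq_sub_one_add_I_mul_add_one_eq_zero {z : ℂ}
    (hz : z ^ 2 - (1 + I) * z + 1 = 0) : conj z ≠ z := by
  intro hreal
  obtain ⟨r, rfl⟩ := Complex.conj_eq_iff_real.mp hreal
  have him : -r = 0 := by simpa [pow_two] using congrArg Complex.im hz
  have hre : r ^ 2 - r + 1 = 0 := by simpa [pow_two] using congrArg Complex.re hz
  nlinarith

theorem injective_vec_conj {z w : ℂ} (hz : conj z ≠ z) (hw : conj w ≠ w) (hzw : z ≠ w)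
    (hzw' : z ≠ conj w) : Function.Injective ![z, conj z, w, conj w] := by
  have hzw_conj : conj z ≠ conj w := (starRingEnd ℂ).injective.ne hzw
  have hzw'_conj : conj z ≠ w := by simpa using (starRingEnd ℂ).injective.ne hzw'
  intro i j hij
  fin_cases i <;> fin_cases j <;>
    simp_all [hz.symm, hw.symm, hzw.symm, hzw'.symm, hzw_conj.symm, hzw'_conj.symm]

/-- If `α` and `β` are the two roots of `x² − (1+i)x + 1`, then the four vectors
`v_k = (α^k, (conj β)^k)`, `k = 0,…,3`, are linearly independent over `ℝ` and span
`ℂ²` as a real vector space, i.e. they form an `ℝ`-basis of `ℂ²`. -/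
theorem lattice_vectors_real_basis (α β : ℂ)
    (hα : α ^ 2 - (1 + I) * α + 1 = 0)
    (hsum : α + β = 1 + I) (hprod : α * β = 1) :
    LinearIndependent ℝ
      (fun k : Fin 4 => ((α ^ (k : ℕ), (starRingEnd ℂ) β ^ (k : ℕ)) : ℂ × ℂ)) ∧
    Submodule.span ℝ
      (Set.range fun k : Fin 4 => ((α ^ (k : ℕ), (starRingEnd ℂ) β ^ (k : ℕ)) : ℂ × ℂ)) =
      ⊤ := by
  have hα_nonreal := conj_ne_self_of_sq_sub_one_add_I_mul_add_one_eq_zero hα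
  have hβ : β ^ 2 - (1 + I) * β + 1 = 0 := by linear_combination β * hsum - hprod
  have hβ_nonreal := conj_ne_self_of_sq_sub_one_add_I_mul_add_one_eq_zero hβ
  have hdisc : (α - β) ^ 2 = 2 * I - 4 := by
    linear_combination (α + β + 1 + I) * hsum - 4 * hprod + I_sq
  have hαβ : α ≠ β := by
    intro h
    simpa [h] using congrArg Complex.re hdisc
  have hαβ' : α ≠ conj β := by
    intro h
    simpa [h] using congrArg Complex.im hsum
  have hinj : Function.Injective ![α, conj α, conj β, conj (conj β)] :=
    injective_vec_conj hα_nonreal (by simpa using hβ_nonreal.symm) hαβ' (by simpa using hαβ)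
  exact ⟨linearIndependent_pow_prod_of_injective hinj, span_pow_prod_eq_top_of_injective hinj⟩
end

section
/- Let α and β be the two roots in ℂ of the polynomial x² − (1+i)x + 1, let Γ ⊆ ℂ² be the ℤ-submodule (additive subgroup) generated by the four vectors v_k := (α^k, (conj β)^k), k = 0, 1, 2, 3, and let L : ℂ² → ℂ² be the ℂ-linear map L(z₁, z₂) = (α·z₁, (conj β)·z₂). Then L maps Γ bijectively onto itself: the image of Γ under L equals Γ. (Hence L induces an automorphism f of the complex torus X = ℂ²/Γ.) -/
open Complex

/-- If `α` and `β` are the two roots of `x² − (1+i)x + 1`, `Γ ⊆ ℂ²` is the `ℤ`-span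
of the vectors `v_k = (α^k, (conj β)^k)`, `k = 0,…,3`, and `L(z₁, z₂) = (α z₁, (conj β) z₂)`,
then `L` maps `Γ` onto itself. -/
theorem linear_map_preserves_lattice (α β : ℂ)
    (hα : α ^ 2 - (1 + I) * α + 1 = 0)
    (hsum : α + β = 1 + I) (hprod : α * β = 1) :
    (fun z : ℂ × ℂ => (α * z.1, (starRingEnd ℂ) β * z.2)) ''
      (Submodule.span ℤ
        (Set.range fun k : Fin 4 =>
          ((α ^ (k : ℕ), (starRingEnd ℂ) β ^ (k : ℕ)) : ℂ × ℂ)) : Set (ℂ × ℂ)) =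
    (Submodule.span ℤ
      (Set.range fun k : Fin 4 =>
        ((α ^ (k : ℕ), (starRingEnd ℂ) β ^ (k : ℕ)) : ℂ × ℂ)) : Set (ℂ × ℂ)) := by
  set γ : ℂ := (starRingEnd ℂ) β with hγdef
  have hβ : β ^ 2 - (1 + I) * β + 1 = 0 := by linear_combination β * hsum - hprod
  have hγ : γ ^ 2 - (1 - I) * γ + 1 = 0 := by
    have h := congrArg (starRingEnd ℂ) hβ
    simp only [map_sub, map_add, map_mul, map_pow, map_one, map_zero, Complex.conj_I] at h
    linear_combination h
  have hα4 : α ^ 4 = 2 * α ^ 3 - 4 * α ^ 2 + 2 * α - 1 := by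
    linear_combination (α ^ 2 - (1 - I) * α + 1) * hα + α ^ 2 * Complex.I_sq
  have hγ4 : γ ^ 4 = 2 * γ ^ 3 - 4 * γ ^ 2 + 2 * γ - 1 := by
    linear_combination (γ ^ 2 - (1 + I) * γ + 1) * hγ + γ ^ 2 * Complex.I_sq
  set v : Fin 4 → ℂ × ℂ := fun k => ((α ^ (k : ℕ), γ ^ (k : ℕ)) : ℂ × ℂ) with hvdef
  set S : Submodule ℤ (ℂ × ℂ) := Submodule.span ℤ (Set.range v) with hS
  have hvmem : ∀ k : Fin 4, v k ∈ S := fun k => Submodule.subset_span ⟨k, rfl⟩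
  let f : ℂ × ℂ →ₗ[ℤ] ℂ × ℂ :=
    { toFun := fun z => (α * z.1, γ * z.2)
      map_add' := by
        intro x y
        simp only [Prod.fst_add, Prod.snd_add, Prod.mk_add_mk, Prod.mk.injEq]
        constructor <;> ring
      map_smul' := by
        intro m z
        simp only [Prod.smul_fst, Prod.smul_snd, RingHom.id_apply, Prod.smul_mk,
          Prod.mk.injEq, zsmul_eq_mul, Prod.fst_mul, Prod.snd_mul, Prod.fst_intCast,
          Prod.snd_intCast]
        constructor <;> ring }
  have h4 : ((α ^ 4, γ ^ 4) : ℂ × ℂ) ∈ S := by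
    have e : ((α ^ 4, γ ^ 4) : ℂ × ℂ)
        = (2 : ℤ) • v 3 - (4 : ℤ) • v 2 + (2 : ℤ) • v 1 - v 0 := by
      show _ = (2 : ℤ) • ((α ^ 3, γ ^ 3) : ℂ × ℂ) - (4 : ℤ) • ((α ^ 2, γ ^ 2) : ℂ × ℂ)
          + (2 : ℤ) • ((α ^ 1, γ ^ 1) : ℂ × ℂ) - ((α ^ 0, γ ^ 0) : ℂ × ℂ)
      simp only [Prod.smul_mk, zsmul_eq_mul, Prod.mk_add_mk, Prod.mk_sub_mk, Prod.mk.injEq]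
      push_cast
      constructor
      · linear_combination hα4
      · linear_combination hγ4
    rw [e]
    exact sub_mem (add_mem (sub_mem (Submodule.smul_mem _ _ (hvmem 3))
      (Submodule.smul_mem _ _ (hvmem 2))) (Submodule.smul_mem _ _ (hvmem 1))) (hvmem 0)
  have hw : ((-α ^ 3 + 2 * α ^ 2 - 4 * α + 2, -γ ^ 3 + 2 * γ ^ 2 - 4 * γ + 2) : ℂ × ℂ) ∈ S := by
    have e : ((-α ^ 3 + 2 * α ^ 2 - 4 * α + 2, -γ ^ 3 + 2 * γ ^ 2 - 4 * γ + 2) : ℂ × ℂ)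
        = -v 3 + (2 : ℤ) • v 2 - (4 : ℤ) • v 1 + (2 : ℤ) • v 0 := by
      show _ = -((α ^ 3, γ ^ 3) : ℂ × ℂ) + (2 : ℤ) • ((α ^ 2, γ ^ 2) : ℂ × ℂ)
          - (4 : ℤ) • ((α ^ 1, γ ^ 1) : ℂ × ℂ) + (2 : ℤ) • ((α ^ 0, γ ^ 0) : ℂ × ℂ)
      simp only [Prod.smul_mk, zsmul_eq_mul, Prod.mk_add_mk, Prod.mk_sub_mk, Prod.neg_mk,
        Prod.mk.injEq]
      push_cast
      constructor <;> ring
    rw [e]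
    exact add_mem (sub_mem (add_mem (neg_mem (hvmem 3)) (Submodule.smul_mem _ _ (hvmem 2)))
      (Submodule.smul_mem _ _ (hvmem 1))) (Submodule.smul_mem _ _ (hvmem 0))
  have hmain : Submodule.map f S = S := by
    apply le_antisymm
    · rw [hS, Submodule.map_span]
      apply Submodule.span_le.mpr
      rintro _ ⟨_, ⟨k, rfl⟩, rfl⟩
      fin_cases k
      · show f (v 0) ∈ S
        have : f (v 0) = v 1 := by
          show ((α * α ^ 0, γ * γ ^ 0) : ℂ × ℂ) = (α ^ 1, γ ^ 1)
          simp only [Prod.mk.injEq]; constructor <;> ring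
        rw [this]; exact hvmem 1
      · show f (v 1) ∈ S
        have : f (v 1) = v 2 := by
          show ((α * α ^ 1, γ * γ ^ 1) : ℂ × ℂ) = (α ^ 2, γ ^ 2)
          simp only [Prod.mk.injEq]; constructor <;> ring
        rw [this]; exact hvmem 2
      · show f (v 2) ∈ S
        have : f (v 2) = v 3 := by
          show ((α * α ^ 2, γ * γ ^ 2) : ℂ × ℂ) = (α ^ 3, γ ^ 3)
          simp only [Prod.mk.injEq]; constructor <;> ring
        rw [this]; exact hvmem 3
      · show f (v 3) ∈ S
        have : f (v 3) = ((α ^ 4, γ ^ 4) : ℂ × ℂ) := by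
          show ((α * α ^ 3, γ * γ ^ 3) : ℂ × ℂ) = (α ^ 4, γ ^ 4)
          simp only [Prod.mk.injEq]; constructor <;> ring
        rw [this]; exact h4
    · rw [hS]
      apply Submodule.span_le.mpr
      rintro _ ⟨k, rfl⟩
      fin_cases k
      · refine Submodule.mem_map.mpr
          ⟨((-α ^ 3 + 2 * α ^ 2 - 4 * α + 2, -γ ^ 3 + 2 * γ ^ 2 - 4 * γ + 2) : ℂ × ℂ), hw, ?_⟩
        show ((α * (-α ^ 3 + 2 * α ^ 2 - 4 * α + 2),
            γ * (-γ ^ 3 + 2 * γ ^ 2 - 4 * γ + 2)) : ℂ × ℂ) = (α ^ 0, γ ^ 0)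
        simp only [Prod.mk.injEq, pow_zero]
        constructor
        · linear_combination -hα4
        · linear_combination -hγ4
      · exact Submodule.mem_map.mpr ⟨v 0, hvmem 0, by
          show ((α * α ^ 0, γ * γ ^ 0) : ℂ × ℂ) = (α ^ 1, γ ^ 1)
          simp only [Prod.mk.injEq]; constructor <;> ring⟩
      · exact Submodule.mem_map.mpr ⟨v 1, hvmem 1, by
          show ((α * α ^ 1, γ * γ ^ 1) : ℂ × ℂ) = (α ^ 2, γ ^ 2)
          simp only [Prod.mk.injEq]; constructor <;> ring⟩
      · exact Submodule.mem_map.mpr ⟨v 2, hvmem 2, by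
          show ((α * α ^ 2, γ * γ ^ 2) : ℂ × ℂ) = (α ^ 3, γ ^ 3)
          simp only [Prod.mk.injEq]; constructor <;> ring⟩
  calc (fun z : ℂ × ℂ => (α * z.1, γ * z.2)) '' (S : Set (ℂ × ℂ))
      = (Submodule.map f S : Set (ℂ × ℂ)) := (Submodule.map_coe f S).symm
    _ = (S : Set (ℂ × ℂ)) := by rw [hmain]
end

section
/- Let α and β be the two roots in ℂ of the polynomial x² − (1+i)x + 1. Then α · conj β is not a root of unity: for every positive integer n, (α · conj β)^n ≠ 1. (Equivalently, the automorphism f = diag(α, conj β) of the complex 2-torus X = ℂ²/Γ acts on the one-dimensional space H⁰(X; K_X) of holomorphic 2-forms by multiplication by α·conj β, and this induced automorphism has infinite order.) -/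
open Complex

private def seq5 : ℕ → ℤ × ℤ
  | 0 => (2, 0)
  | 1 => (1, -1)
  | (n+2) => ((seq5 (n+1)).1 - 5*(seq5 (n+1)).2 - (seq5 n).1,
              (seq5 (n+1)).2 - (seq5 (n+1)).1 - (seq5 n).2)

private lemma sqrt5_gt_two : (2:ℝ) < Real.sqrt 5 := by
  have h4 : Real.sqrt 4 = 2 := by
    rw [show (4:ℝ) = 2^2 by norm_num, Real.sqrt_sq]; norm_num
  have := Real.sqrt_lt_sqrt (by norm_num : (0:ℝ) ≤ 4) (by norm_num : (4:ℝ) < 5)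
  linarith [h4 ▸ this]

private lemma seq5_g (n : ℕ) :
    2 ≤ ((seq5 n).1 : ℝ) - (seq5 n).2 * Real.sqrt 5 ∧
    ((seq5 n).1 : ℝ) - (seq5 n).2 * Real.sqrt 5 <
      ((seq5 (n+1)).1 : ℝ) - (seq5 (n+1)).2 * Real.sqrt 5 := by
  have h5 := sqrt5_gt_two
  have hsq : Real.sqrt 5 * Real.sqrt 5 = 5 := Real.mul_self_sqrt (by norm_num)
  induction n with
  | zero =>
    simp [seq5]
    linarith
  | succ k ih =>
    obtain ⟨h1, h2⟩ := ih
    have hg' : (2:ℝ) ≤ ((seq5 (k+1)).1 : ℝ) - (seq5 (k+1)).2 * Real.sqrt 5 := by linarith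
    have hrec : ((seq5 (k+2)).1 : ℝ) - (seq5 (k+2)).2 * Real.sqrt 5 =
        (1 + Real.sqrt 5) * (((seq5 (k+1)).1 : ℝ) - (seq5 (k+1)).2 * Real.sqrt 5)
          - (((seq5 k).1 : ℝ) - (seq5 k).2 * Real.sqrt 5) := by
      simp only [seq5]
      push_cast
      linear_combination ((seq5 (k+1)).2 : ℝ) * hsq
    have hnn : (0:ℝ) ≤ (Real.sqrt 5 - 2) * (((seq5 (k+1)).1 : ℝ) - (seq5 (k+1)).2 * Real.sqrt 5) :=
      mul_nonneg (by linarith) (by linarith)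
    refine ⟨hg', ?_⟩
    rw [hrec]; nlinarith

/-- If `α` and `β` are the two roots of `x² − (1+i)x + 1`, then `α · conj β` is not
a root of unity: `(α · conj β)^n ≠ 1` for every positive integer `n`. -/
theorem alpha_mul_conj_beta_not_root_of_unity (α β : ℂ)
    (hα : α ^ 2 - (1 + I) * α + 1 = 0)
    (hsum : α + β = 1 + I) (hprod : α * β = 1) :
    ∀ n : ℕ, 0 < n → (α * (starRingEnd ℂ) β) ^ n ≠ 1 := by
  set c := starRingEnd ℂ with hc
  have hβ : β ^ 2 - (1 + I) * β + 1 = 0 := by linear_combination β * hsum - hprod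
  have hαc : (c α) ^ 2 - (1 - I) * (c α) + 1 = 0 := by
    have h := congrArg c hα
    simp only [map_sub, map_add, map_mul, map_pow, map_one, map_zero, hc, Complex.conj_I] at h
    linear_combination h
  have hβc : (c β) ^ 2 - (1 - I) * (c β) + 1 = 0 := by
    have h := congrArg c hβ
    simp only [map_sub, map_add, map_mul, map_pow, map_one, map_zero, hc, Complex.conj_I] at h
    linear_combination h
  have hsum_c : c α + c β = 1 - I := by
    have h := congrArg c hsum
    simp only [map_add, map_one, hc, Complex.conj_I] at h
    linear_combination h
  have hprod_c : c α * c β = 1 := by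
    have h := congrArg c hprod
    simpa only [map_mul, map_one, hc] using h
  -- the sum of squared norms
  have h1 : (α * c α) ^ 2 = 2 * (α * c α) - (1 + I) * α - (1 - I) * (c α) + 1 := by
    linear_combination (c α)^2 * hα + ((1+I)*α - 1) * hαc + (-(α * c α)) * Complex.I_sq
  have h2 : (β * c β) ^ 2 = 2 * (β * c β) - (1 + I) * β - (1 - I) * (c β) + 1 := by
    linear_combination (c β)^2 * hβ + ((1+I)*β - 1) * hβc + (-(β * c β)) * Complex.I_sq
  have huv : (α * c α) * (β * c β) = 1 := by
    linear_combination (c α * c β) * hprod + hprod_c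
  have hScx : (α * c α + β * c β) ^ 2 = 2 * (α * c α + β * c β) + 4 := by
    linear_combination h1 + h2 + 2 * huv - (1+I) * hsum - (1-I) * hsum_c - 2 * Complex.I_sq
  set S : ℝ := Complex.normSq α + Complex.normSq β with hSdef
  have hcastS : ((S : ℝ) : ℂ) = α * c α + β * c β := by
    rw [hSdef]; push_cast
    rw [← Complex.mul_conj α, ← Complex.mul_conj β]
  have hSr : S ^ 2 = 2 * S + 4 := by
    have : ((S:ℝ):ℂ) ^ 2 = 2 * ((S:ℝ):ℂ) + 4 := by rw [hcastS]; exact hScx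
    exact_mod_cast this
  have hαne : α ≠ 0 := by
    intro h; rw [h] at hprod; simp at hprod
  have hSpos : 0 < S := by
    have := Complex.normSq_pos.2 hαne
    have := Complex.normSq_nonneg β
    rw [hSdef]; linarith
  have h5 := sqrt5_gt_two
  have hsq : Real.sqrt 5 * Real.sqrt 5 = 5 := Real.mul_self_sqrt (by norm_num)
  have hSval : S = 1 + Real.sqrt 5 := by
    have hfac : (S - (1 + Real.sqrt 5)) * (S - (1 - Real.sqrt 5)) = 0 := by nlinarith
    rcases mul_eq_zero.1 hfac with h | h
    · linarith
    · nlinarith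
  -- main quantity
  set z : ℂ := α * c β with hz
  have hcz : c z = c α * β := by
    rw [hz, hc]
    simp only [map_mul, Complex.conj_conj]
  have hz1 : z * c z = 1 := by
    rw [hz, hcz]
    linear_combination (c α * c β) * hprod + hprod_c
  have hS5 : ((S:ℝ):ℂ) = 1 + ((Real.sqrt 5 : ℝ):ℂ) := by
    rw [hSval]; push_cast; ring
  have hz2 : z + c z = 1 - ((Real.sqrt 5 : ℝ) : ℂ) := by
    rw [hz, hcz]
    rw [hS5] at hcastS
    linear_combination (c α + c β) * hsum + (1+I) * hsum_c + hcastS - Complex.I_sq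
  have h5c : ((Real.sqrt 5 : ℝ) : ℂ) ^ 2 = 5 := by
    rw [← Complex.ofReal_pow]
    norm_cast
    nlinarith
  have T : ∀ k, z ^ k + (c z) ^ k =
      ((seq5 k).1 : ℂ) + ((seq5 k).2 : ℂ) * ((Real.sqrt 5 : ℝ) : ℂ) := by
    intro k
    induction k using Nat.twoStepInduction with
    | zero => norm_num [seq5]
    | one =>
      simp only [seq5, pow_one]
      push_cast
      linear_combination hz2
    | more k ih1 ih2 =>
      have hrec : z ^ (k+2) + (c z) ^ (k+2) =
          (z + c z) * (z ^ (k+1) + (c z) ^ (k+1)) - (z * c z) * (z ^ k + (c z) ^ k) := by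
        ring
      rw [hrec, hz1, hz2, ih1, ih2]
      simp only [seq5]
      push_cast
      linear_combination (-((seq5 (k+1)).2 : ℂ)) * h5c
  intro n hn h
  have hwn : (c z) ^ n = 1 := by
    rw [← map_pow, h, hc, map_one]
  have hT := T n
  rw [h, hwn] at hT
  have hR : (2:ℝ) = ((seq5 n).1 : ℝ) + ((seq5 n).2 : ℝ) * Real.sqrt 5 := by
    have : (2:ℂ) = ((((seq5 n).1 : ℝ) + ((seq5 n).2 : ℝ) * Real.sqrt 5 : ℝ) : ℂ) := by
      push_cast
      linear_combination hT
    exact_mod_cast this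
  have hirr : Irrational (Real.sqrt 5) := by
    have : Nat.Prime 5 := by norm_num
    simpa using this.irrational_sqrt
  have hb : (seq5 n).2 = 0 := by
    by_contra hb
    apply hirr
    refine ⟨(2 - (seq5 n).1) / (seq5 n).2, ?_⟩
    have hbR : ((seq5 n).2 : ℝ) ≠ 0 := Int.cast_ne_zero.2 hb
    push_cast
    field_simp
    linarith
  have ha : ((seq5 n).1 : ℝ) = 2 := by
    rw [hb] at hR; push_cast at hR; linarith
  obtain ⟨m, rfl⟩ : ∃ m, n = m + 1 := ⟨n - 1, (Nat.succ_pred_eq_of_pos hn).symm⟩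
  have hg := seq5_g m
  have hg2 := hg.2
  rw [ha, hb] at hg2
  push_cast at hg2
  linarith [hg.1]
end

section
/- Let α and β be the two roots in ℂ of the polynomial x² − (1+i)x + 1, and set λ₀ := α and λ₁ := conj β. Then a matrix A ∈ M₂(ℂ) satisfies λ_j · conj(λ_k) · A j k = A j k for all j, k ∈ {0,1} if and only if A 0 0 = 0 and A 1 1 = 0. (Geometrically: the invariant (1,1)-forms on the torus X = ℂ²/Γ that are invariant under the automorphism f = diag(α, conj β) are exactly the complex linear combinations of dz¹∧dz̄² and dz²∧dz̄¹.) -/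
open Complex ComplexConjugate

/-! The coefficient `A j k` is fixed iff `λ_j · conj λ_k = 1` or `A j k = 0`. Off the diagonal
`α · β = 1` and `conj β · conj α = conj (α β) = 1`, so those coefficients are free. On the
diagonal `|α|² = 1` would force `conj α = α⁻¹ = β`, making `α + β = 2 Re α` real, which
contradicts `α + β = 1 + i`; likewise for `β`. -/

theorem mul_conj_ne_one_of_mul_eq_one {a b : ℂ} (hab : a * b = 1) (him : (a + b).im ≠ 0) :
    a * conj a ≠ 1 := by
  intro h
  have hb : conj a = b := mul_left_cancel₀ (left_ne_zero_of_mul_eq_one hab) (h.trans hab.symm)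
  exact him (by rw [← hb, add_conj, ofReal_im])

theorem invariant_one_one_forms_general (α β : ℂ)
    (hsum : α + β = 1 + I) (hprod : α * β = 1)
    (A : Matrix (Fin 2) (Fin 2) ℂ) :
    (∀ j k : Fin 2,
        ![α, (starRingEnd ℂ) β] j * (starRingEnd ℂ) (![α, (starRingEnd ℂ) β] k) * A j k
          = A j k) ↔
      A 0 0 = 0 ∧ A 1 1 = 0 := by
  have him : (α + β).im ≠ 0 := by simp [hsum]
  have h00 : α * conj α ≠ 1 := mul_conj_ne_one_of_mul_eq_one hprod him
  have h11 : conj β * β ≠ 1 := by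
    rw [mul_comm]
    exact mul_conj_ne_one_of_mul_eq_one (by rwa [mul_comm]) (by rwa [add_comm])
  have h10 : conj β * conj α = 1 := by rw [← map_mul, mul_comm, hprod, map_one]
  simp only [Fin.forall_fin_two, Matrix.cons_val_zero, Matrix.cons_val_one, conj_conj,
    mul_left_eq_self₀, h00, h11, hprod, h10, true_or, false_or, and_true, true_and]

/-- Let `α`, `β` be the two roots of `x² − (1+i)x + 1` and set `λ₀ = α`, `λ₁ = conj β`.
A matrix `A ∈ M₂(ℂ)` satisfies `λ_j · conj(λ_k) · A j k = A j k` for all `j, k` if and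
only if `A 0 0 = 0` and `A 1 1 = 0`. -/
theorem invariant_one_one_forms (α β : ℂ)
    (hα : α ^ 2 - (1 + I) * α + 1 = 0)
    (hsum : α + β = 1 + I) (hprod : α * β = 1)
    (A : Matrix (Fin 2) (Fin 2) ℂ) :
    (∀ j k : Fin 2,
        ![α, (starRingEnd ℂ) β] j * (starRingEnd ℂ) (![α, (starRingEnd ℂ) β] k) * A j k
          = A j k) ↔
      A 0 0 = 0 ∧ A 1 1 = 0 :=
  invariant_one_one_forms_general α β hsum hprod A
end

section
/- Let α and β be the two roots in ℂ of the polynomial x² − (1+i)x + 1, and let D ∈ M₂(ℂ) be the diagonal matrix with diagonal entries α and conj β. If A ∈ M₂(ℂ) is Hermitian positive semidefinite and satisfies D · A · Dᴴ = A (where Dᴴ is the conjugate transpose of D), then A = 0. (Geometrically: there is no nonzero nonnegative translation-invariant (1,1)-form on the torus X = ℂ²/Γ invariant under the automorphism f = diag(α, conj β); this is the key step showing the Kähler rank of the torus-suspension M over an elliptic curve with fibre X and monodromy f equals 1.) -/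
open Complex Matrix
open scoped ComplexOrder

/-!
Conjugating by `D = diagonal d` multiplies the entry `A i i` by `‖d i‖²`, so invariance kills every
diagonal entry with `‖d i‖ ≠ 1`, and a positive semidefinite matrix of trace zero vanishes. Here
`‖α‖ ≠ 1` and `‖β‖ ≠ 1`: otherwise `αβ = 1` gives `β = conj α`, and `α + β = 1 + i` would be real.
-/

namespace Matrix

variable {𝕜 n : Type*} [RCLike 𝕜] [Fintype n] [DecidableEq n]

lemma diagonal_mul_mul_conjTranspose_diagonal_apply (d : n → 𝕜) (A : Matrix n n 𝕜) (i j : n) :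
    (diagonal d * A * (diagonal d)ᴴ) i j = d i * A i j * star (d j) := by
  simp [diagonal_mul, mul_diagonal, diagonal_conjTranspose]

lemma diag_eq_zero_of_diagonal_mul_mul_conjTranspose_eq {d : n → 𝕜} (hd : ∀ i, ‖d i‖ ≠ 1)
    {A : Matrix n n 𝕜} (hinv : diagonal d * A * (diagonal d)ᴴ = A) (i : n) : A i i = 0 := by
  have hii : d i * star (d i) * A i i = A i i := by
    have h := congrFun (congrFun hinv i) i
    rw [diagonal_mul_mul_conjTranspose_diagonal_apply] at h
    linear_combination h
  have hnorm : d i * star (d i) ≠ 1 := by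
    rw [RCLike.star_def, RCLike.mul_conj]
    exact_mod_cast (pow_eq_one_iff_of_nonneg (norm_nonneg _) two_ne_zero).not.mpr (hd i)
  by_contra h
  exact hnorm (mul_right_cancel₀ h (hii.trans (one_mul _).symm))

lemma PosSemidef.eq_zero_of_diagonal_mul_mul_conjTranspose_eq {d : n → 𝕜}
    (hd : ∀ i, ‖d i‖ ≠ 1) {A : Matrix n n 𝕜} (hA : A.PosSemidef)
    (hinv : diagonal d * A * (diagonal d)ᴴ = A) : A = 0 :=
  hA.trace_eq_zero_iff.mp <|
    Finset.sum_eq_zero fun i _ => diag_eq_zero_of_diagonal_mul_mul_conjTranspose_eq hd hinv i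

end Matrix

lemma Complex.norm_ne_one_of_mul_eq_one_of_im_add_ne_zero {α β : ℂ} (hprod : α * β = 1)
    (him : (α + β).im ≠ 0) : ‖α‖ ≠ 1 := by
  intro hα
  have hβ : β = starRingEnd ℂ α := by
    have hαne : α ≠ 0 := left_ne_zero_of_mul_eq_one hprod
    apply mul_left_cancel₀ hαne
    rw [hprod, Complex.mul_conj', hα]
    norm_num
  exact him (by simp [hβ])

theorem no_invariant_psd_form_general (α β : ℂ)
    (hsum : α + β = 1 + I) (hprod : α * β = 1)
    (A : Matrix (Fin 2) (Fin 2) ℂ)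
    (hA : A.PosSemidef)
    (hinv : Matrix.diagonal ![α, (starRingEnd ℂ) β] * A *
        (Matrix.diagonal ![α, (starRingEnd ℂ) β])ᴴ = A) :
    A = 0 := by
  have him : (α + β).im ≠ 0 := by simp [hsum]
  refine hA.eq_zero_of_diagonal_mul_mul_conjTranspose_eq (fun i => ?_) hinv
  fin_cases i
  · exact norm_ne_one_of_mul_eq_one_of_im_add_ne_zero hprod him
  · simpa using norm_ne_one_of_mul_eq_one_of_im_add_ne_zero (β := α)
      (by rwa [mul_comm]) (by rwa [add_comm])

/-- Let `α`, `β` be the two roots of `x² − (1+i)x + 1` and `D = diag(α, conj β)`.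
If `A ∈ M₂(ℂ)` is Hermitian positive semidefinite and `D · A · Dᴴ = A`, then `A = 0`. -/
theorem no_invariant_psd_form (α β : ℂ)
    (hα : α ^ 2 - (1 + I) * α + 1 = 0)
    (hsum : α + β = 1 + I) (hprod : α * β = 1)
    (A : Matrix (Fin 2) (Fin 2) ℂ)
    (hA : A.PosSemidef)
    (hinv : Matrix.diagonal ![α, (starRingEnd ℂ) β] * A *
        (Matrix.diagonal ![α, (starRingEnd ℂ) β])ᴴ = A) :
    A = 0 :=
  no_invariant_psd_form_general α β hsum hprod A hA hinv
end
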